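/- arXiv:0907.4827 — 5 statements merged into one kernel-verified Lean document; each statement's English description precedes it below -/
import Mathlib

section
/- There is an absolute constant C such that for all real numbers λ ≥ 1, N ≥ 1, and all τ₀ ∈ ℝ, one has ∫_{N λ^{−1/2}}^{∞} (1 + λ|s² − τ₀|)^{−2} ds ≤ C N^{−1} λ^{−1/2}. -/
/-!
Put `r = √τ₀` (which is `0` when `τ₀ ≤ 0`). For `s ≥ 0` one has `|s² - τ₀| ≥ s |s - r|`,
so on `s ≥ c := N λ^{-1/2}` the kernel is dominated by `(1 + λ c |s - r|)⁻²`. Its integral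
over the whole line is `2 / (λ c) = 2 N⁻¹ λ^{-1/2}`, whatever the shift `r`.
-/

open MeasureTheory Real Set Filter

theorem integral_Ioi_inv_one_add_mul_sq {a : ℝ} (ha : 0 < a) :
    ∫ x in Ioi (0 : ℝ), ((1 + a * x) ^ 2)⁻¹ = a⁻¹ := by
  have hderiv : ∀ x ∈ Ici (0 : ℝ),
      HasDerivAt (fun y => -a⁻¹ * (1 + a * y)⁻¹) ((1 + a * x) ^ 2)⁻¹ x := by
    intro x (hx : 0 ≤ x)
    have hne : 1 + a * x ≠ 0 := by positivity
    have hlin : HasDerivAt (fun y => 1 + a * y) a x := by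
      simpa using ((hasDerivAt_id x).const_mul a).const_add 1
    exact ((hlin.inv hne).const_mul (-a⁻¹)).congr_deriv (by field_simp)
  have hlim : Tendsto (fun y => -a⁻¹ * (1 + a * y)⁻¹) atTop (nhds 0) := by
    simpa using (tendsto_atTop_add_const_left atTop 1
      (tendsto_id.const_mul_atTop ha)).inv_tendsto_atTop.const_mul (-a⁻¹)
  rw [integral_Ioi_of_hasDerivAt_of_nonneg' hderiv (fun x _ => by positivity) hlim]
  simp

theorem integrable_inv_one_add_mul_abs_sq {a : ℝ} (ha : 0 < a) :
    Integrable fun x : ℝ => ((1 + a * |x|) ^ 2)⁻¹ := by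
  have h : Integrable fun y : ℝ => (1 + ‖y‖) ^ (-(2 : ℝ)) :=
    integrable_one_add_norm (by norm_num)
  convert h.comp_mul_left' ha.ne' using 2 with x
  rw [rpow_neg (by positivity), Real.norm_eq_abs, abs_mul, abs_of_pos ha, rpow_two]

theorem integral_inv_one_add_mul_abs_sq {a : ℝ} (ha : 0 < a) :
    ∫ x : ℝ, ((1 + a * |x|) ^ 2)⁻¹ = 2 * a⁻¹ := by
  rw [integral_comp_abs (f := fun x => ((1 + a * x) ^ 2)⁻¹), integral_Ioi_inv_one_add_mul_sq ha]

theorem mul_abs_sub_sqrt_le_abs_sq_sub {s : ℝ} (hs : 0 ≤ s) (τ : ℝ) :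
    s * |s - √τ| ≤ |s ^ 2 - τ| := by
  rcases le_or_gt τ 0 with hτ | hτ
  · rw [sqrt_eq_zero'.mpr hτ, sub_zero, abs_of_nonneg hs, abs_of_nonneg (by nlinarith)]
    nlinarith
  · have hfac : s ^ 2 - τ = (s - √τ) * (s + √τ) := by
      linear_combination sq_sqrt hτ.le
    rw [hfac, abs_mul, abs_of_nonneg (by positivity : 0 ≤ s + √τ), mul_comm]
    exact mul_le_mul_of_nonneg_left (le_add_of_nonneg_right (sqrt_nonneg τ)) (abs_nonneg _)

theorem inv_one_add_mul_abs_sq_sub_sq_le {lam c s : ℝ} (hlam : 0 ≤ lam) (hc : 0 ≤ c)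
    (hcs : c ≤ s) (τ : ℝ) :
    ((1 + lam * |s ^ 2 - τ|) ^ 2)⁻¹ ≤ ((1 + lam * c * |s - √τ|) ^ 2)⁻¹ := by
  have h : lam * c * |s - √τ| ≤ lam * |s ^ 2 - τ| := calc
    lam * c * |s - √τ| ≤ lam * (s * |s - √τ|) := by
      rw [mul_assoc]; gcongr
    _ ≤ lam * |s ^ 2 - τ| := by
      gcongr; exact mul_abs_sub_sqrt_le_abs_sq_sub (hc.trans hcs) τ
  gcongr

theorem setIntegral_Ici_inv_one_add_mul_abs_sq_sub_sq_le {lam c : ℝ} (hlam : 0 < lam) (hc : 0 < c)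
    (τ : ℝ) :
    ∫ s in Ici c, ((1 + lam * |s ^ 2 - τ|) ^ 2)⁻¹ ≤ 2 * (lam * c)⁻¹ := by
  have hg := (integrable_inv_one_add_mul_abs_sq (mul_pos hlam hc)).comp_sub_right √τ
  calc ∫ s in Ici c, ((1 + lam * |s ^ 2 - τ|) ^ 2)⁻¹
      ≤ ∫ s in Ici c, ((1 + lam * c * |s - √τ|) ^ 2)⁻¹ := by
        refine integral_mono_of_nonneg (ae_of_all _ fun s => by positivity) hg.integrableOn ?_
        filter_upwards [ae_restrict_mem measurableSet_Ici] with s (hs : c ≤ s)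
        exact inv_one_add_mul_abs_sq_sub_sq_le hlam.le hc.le hs τ
    _ ≤ ∫ s, ((1 + lam * c * |s - √τ|) ^ 2)⁻¹ :=
        setIntegral_le_integral hg (ae_of_all _ fun s => by positivity)
    _ = 2 * (lam * c)⁻¹ := by
        rw [integral_sub_right_eq_self (fun x => ((1 + lam * c * |x|) ^ 2)⁻¹),
          integral_inv_one_add_mul_abs_sq (mul_pos hlam hc)]

/-- There is an absolute constant `C` such that for all real `λ ≥ 1`,
`N ≥ 1` and all `τ₀ ∈ ℝ`, one has
`∫_{N λ^{-1/2}}^∞ (1 + λ|s² - τ₀|)⁻² ds ≤ C N⁻¹ λ^{-1/2}`. -/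
theorem bilinear_kernel_integral_bound :
    ∃ C : ℝ, 0 < C ∧ ∀ lam N τ₀ : ℝ, 1 ≤ lam → 1 ≤ N →
      (∫ s in Set.Ici (N * lam ^ (-(1 : ℝ) / 2)),
          ((1 + lam * |s ^ 2 - τ₀|) ^ 2)⁻¹)
        ≤ C * N⁻¹ * lam ^ (-(1 : ℝ) / 2) := by
  refine ⟨2, two_pos, fun lam N τ₀ hlam hN => ?_⟩
  have hlam0 : 0 < lam := one_pos.trans_le hlam
  have hN0 : 0 < N := one_pos.trans_le hN
  have hscale : (lam * (N * lam ^ (-(1 : ℝ) / 2)))⁻¹ = N⁻¹ * lam ^ (-(1 : ℝ) / 2) := by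
    rw [mul_left_comm, ← rpow_one_add' hlam0.le (by norm_num), mul_inv, ← rpow_neg hlam0.le]
    norm_num
  have hc : 0 < N * lam ^ (-(1 : ℝ) / 2) := mul_pos hN0 (rpow_pos_of_pos hlam0 _)
  calc _ ≤ 2 * (lam * (N * lam ^ (-(1 : ℝ) / 2)))⁻¹ :=
        setIntegral_Ici_inv_one_add_mul_abs_sq_sub_sq_le hlam0 hc τ₀
    _ = 2 * N⁻¹ * lam ^ (-(1 : ℝ) / 2) := by rw [hscale, mul_assoc]
end

section
/- There is an absolute constant C such that for all λ ≥ 1 and N ≥ 1 the kernel K(t,t'; s,s') := (1 + λ|(t+t') − (s+s')|)^{−2} · (1 + λ|(t−t')² − (s−s')²|)^{−2} satisfies sup_{(s,s') ∈ ℝ²} ∬_{{(t,t') : |t−t'| ≥ N λ^{−1/2}}} K(t,t'; s,s') dt dt' ≤ C λ^{−3/2} N^{−1}. -/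
/-!
In the coordinates `u = t + t'`, `v = t - t'` (Jacobian `1/2`) the kernel factors as
`G(u) H(v²)`, where `G` and `H` are translates of `x ↦ (1 + λ|x|)⁻²`, which has integral at most
`π/λ` by comparison with the Cauchy density `(1 + (λx)²)⁻¹`. The `u`-integral is therefore
`O(λ⁻¹)`. On `|v| ≥ δ = Nλ^{-1/2}` one has `1 ≤ |v|/δ`, so substituting `w = v²` on each half-line
bounds the `v`-integral by `δ⁻¹ π/λ`. Altogether the integral is at most
`π²/(2λ²δ) = (π²/2) λ^{-3/2} N⁻¹`.
-/

open MeasureTheory Real Set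
open scoped ENNReal

namespace Real

theorem lintegral_comp_mul_left (F : ℝ → ℝ≥0∞) {a : ℝ} (ha : a ≠ 0) :
    ∫⁻ x, F (a * x) = ENNReal.ofReal |a⁻¹| * ∫⁻ x, F x := by
  rw [← smul_eq_mul, ← lintegral_smul_measure, ← map_volume_mul_left ha]
  exact ((Homeomorph.mulLeft₀ a ha).measurableEmbedding.lintegral_map F).symm

end Real

theorem setLIntegral_comp_sq_le {s : Set ℝ} (hs : MeasurableSet s) (hinj : InjOn (· ^ 2) s)
    {δ : ℝ} (hδ : 0 < δ) (hsδ : ∀ v ∈ s, δ ≤ |v|) (F : ℝ → ℝ≥0∞) :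
    ∫⁻ v in s, F (v ^ 2) ≤ ENNReal.ofReal (2 * δ)⁻¹ * ∫⁻ w, F w := by
  have hderiv (v : ℝ) : HasDerivWithinAt (· ^ 2) (2 * v) s v := by
    simpa using (hasDerivAt_pow 2 v).hasDerivWithinAt
  calc ∫⁻ v in s, F (v ^ 2)
      ≤ ∫⁻ v in s, ENNReal.ofReal (2 * δ)⁻¹ * (ENNReal.ofReal |2 * v| * F (v ^ 2)) := by
        refine setLIntegral_mono' hs fun v hv => ?_
        rw [← mul_assoc, ← ENNReal.ofReal_mul (by positivity)]
        refine le_mul_of_one_le_left zero_le (ENNReal.one_le_ofReal.2 ?_)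
        rw [abs_mul, abs_two, mul_inv, mul_mul_mul_comm, inv_mul_cancel₀ two_ne_zero, one_mul,
          ← div_eq_inv_mul, one_le_div hδ]
        exact hsδ v hv
    _ = ENNReal.ofReal (2 * δ)⁻¹ * ∫⁻ w in (· ^ 2) '' s, F w := by
        rw [lintegral_const_mul' _ _ ENNReal.ofReal_ne_top,
          lintegral_image_eq_lintegral_abs_deriv_mul hs (fun v _ => hderiv v) hinj]
    _ ≤ ENNReal.ofReal (2 * δ)⁻¹ * ∫⁻ w, F w := by
        gcongr
        exact Measure.restrict_le_self

theorem setLIntegral_abs_ge_comp_sq_le {δ : ℝ} (hδ : 0 < δ) (F : ℝ → ℝ≥0∞) :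
    ∫⁻ v in {v | δ ≤ |v|}, F (v ^ 2) ≤ ENNReal.ofReal δ⁻¹ * ∫⁻ w, F w := by
  have hsplit : {v : ℝ | δ ≤ |v|} = Iic (-δ) ∪ Ici δ := by
    ext v
    simp [le_abs', or_comm]
  have hneg : ∫⁻ v in Iic (-δ), F (v ^ 2) ≤ ENNReal.ofReal (2 * δ)⁻¹ * ∫⁻ w, F w := by
    refine setLIntegral_comp_sq_le measurableSet_Iic (fun x hx y hy h => ?_) hδ
      (fun v hv => ?_) F
    · rw [mem_Iic] at hx hy
      exact neg_inj.1 ((sq_eq_sq₀ (by linarith) (by linarith)).1 (by simpa only [neg_sq] using h))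
    · rw [mem_Iic] at hv
      rw [abs_of_neg (by linarith)]
      linarith
  have hpos : ∫⁻ v in Ici δ, F (v ^ 2) ≤ ENNReal.ofReal (2 * δ)⁻¹ * ∫⁻ w, F w :=
    setLIntegral_comp_sq_le measurableSet_Ici
      ((pow_left_strictMonoOn₀ two_ne_zero).injOn.mono fun _ hv => hδ.le.trans hv) hδ
      (fun v hv => (mem_Ici.1 hv).trans (le_abs_self v)) F
  have htwo : 2 * ENNReal.ofReal (2 * δ)⁻¹ = ENNReal.ofReal δ⁻¹ := by
    rw [← ENNReal.ofReal_ofNat 2, ← ENNReal.ofReal_mul zero_le_two, mul_inv,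
      mul_inv_cancel_left₀ two_ne_zero]
  calc ∫⁻ v in {v | δ ≤ |v|}, F (v ^ 2)
      ≤ (∫⁻ v in Iic (-δ), F (v ^ 2)) + ∫⁻ v in Ici δ, F (v ^ 2) :=
        hsplit ▸ lintegral_union_le _ _ _
    _ ≤ ENNReal.ofReal (2 * δ)⁻¹ * (∫⁻ w, F w) + ENNReal.ofReal (2 * δ)⁻¹ * ∫⁻ w, F w :=
        add_le_add hneg hpos
    _ = ENNReal.ofReal δ⁻¹ * ∫⁻ w, F w := by rw [← two_mul, ← mul_assoc, htwo]

theorem lintegral_inv_one_add_mul_abs_sub_sq_le {a : ℝ} (ha : 0 < a) (c : ℝ) :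
    ∫⁻ x, ENNReal.ofReal ((1 + a * |x - c|) ^ 2)⁻¹ ≤ ENNReal.ofReal (π / a) := by
  have hcauchy : ∫⁻ u : ℝ, ENNReal.ofReal (1 + u ^ 2)⁻¹ = ENNReal.ofReal π := by
    rw [← integral_univ_inv_one_add_sq, ofReal_integral_eq_lintegral_ofReal
      integrable_inv_one_add_sq (.of_forall fun x => by positivity)]
  calc ∫⁻ x, ENNReal.ofReal ((1 + a * |x - c|) ^ 2)⁻¹
      ≤ ∫⁻ x, ENNReal.ofReal (1 + (a * (x - c)) ^ 2)⁻¹ := by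
        refine lintegral_mono fun x => ENNReal.ofReal_le_ofReal (inv_anti₀ (by positivity) ?_)
        have hsq : (a * (x - c)) ^ 2 = (a * |x - c|) ^ 2 := by rw [mul_pow, mul_pow, sq_abs]
        nlinarith [mul_nonneg ha.le (abs_nonneg (x - c))]
    _ = ∫⁻ x, ENNReal.ofReal (1 + (a * x) ^ 2)⁻¹ :=
        lintegral_sub_right_eq_self (fun x => ENNReal.ofReal (1 + (a * x) ^ 2)⁻¹) c
    _ = ENNReal.ofReal (π / a) := by
        rw [Real.lintegral_comp_mul_left (fun u => ENNReal.ofReal (1 + u ^ 2)⁻¹) ha.ne', hcauchy,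
          ← ENNReal.ofReal_mul (abs_nonneg _), abs_inv, abs_of_pos ha, inv_mul_eq_div]

theorem lintegral_comp_add_mul_comp_sub {G H : ℝ → ℝ≥0∞} (hG : Measurable G)
    (hH : Measurable H) :
    ∫⁻ p : ℝ × ℝ, G (p.1 + p.2) * H (p.1 - p.2) = 2⁻¹ * (∫⁻ u, G u) * ∫⁻ v, H v := by
  have hshear : MeasurePreserving (fun z : ℝ × ℝ => (z.1 + z.2, z.2)) := by
    rw [Measure.volume_eq_prod]
    exact measurePreserving_add_prod volume volume
  have hdilate (v : ℝ) : ∫⁻ t, G (v + 2 * t) = 2⁻¹ * ∫⁻ u, G u := by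
    rw [Real.lintegral_comp_mul_left (fun x => G (v + x)) two_ne_zero,
      lintegral_add_left_eq_self G v, abs_inv, abs_two, ENNReal.ofReal_inv_of_pos two_pos,
      ENNReal.ofReal_ofNat]
  calc ∫⁻ p : ℝ × ℝ, G (p.1 + p.2) * H (p.1 - p.2)
      = ∫⁻ z : ℝ × ℝ, G (z.1 + 2 * z.2) * H z.1 := by
        rw [← hshear.lintegral_comp (by fun_prop)]
        simp only [add_sub_cancel_right, add_assoc, two_mul]
    _ = ∫⁻ v, (∫⁻ t, G (v + 2 * t)) * H v := by
        rw [Measure.volume_eq_prod, lintegral_prod _ (by fun_prop)]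
        exact lintegral_congr fun v => lintegral_mul_const (H v)
          (by fun_prop : Measurable fun t => G (v + 2 * t))
    _ = 2⁻¹ * (∫⁻ u, G u) * ∫⁻ v, H v := by
        simp only [hdilate, lintegral_const_mul _ hH]

theorem setLIntegral_preimage_sub_comp_add_mul_comp_sub {G H : ℝ → ℝ≥0∞} (hG : Measurable G)
    (hH : Measurable H) {A : Set ℝ} (hA : MeasurableSet A) :
    ∫⁻ p in (fun p : ℝ × ℝ => p.1 - p.2) ⁻¹' A, G (p.1 + p.2) * H (p.1 - p.2)
      = 2⁻¹ * (∫⁻ u, G u) * ∫⁻ v in A, H v := by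
  have hindicator (p : ℝ × ℝ) :
      ((fun p : ℝ × ℝ => p.1 - p.2) ⁻¹' A).indicator (fun p => G (p.1 + p.2) * H (p.1 - p.2)) p
        = G (p.1 + p.2) * A.indicator H (p.1 - p.2) := by
    rw [indicator_mul_right]
    exact congrArg _ (indicator_comp_right (fun p : ℝ × ℝ => p.1 - p.2))
  rw [← lintegral_indicator (hA.preimage (by fun_prop)), ← lintegral_indicator hA]
  simp only [hindicator]
  exact lintegral_comp_add_mul_comp_sub hG (hH.indicator hA)

/-- There is an absolute constant `C` such that for all `λ ≥ 1` and `N ≥ 1`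
the kernel `K(t,t';s,s') = (1 + λ|(t+t') - (s+s')|)⁻² (1 + λ|(t-t')² - (s-s')²|)⁻²` satisfies
`sup_{(s,s')} ∬_{|t-t'| ≥ N λ^{-1/2}} K(t,t';s,s') dt dt' ≤ C λ^{-3/2} N⁻¹`. -/
theorem kernel_offdiagonal_L1_bound :
    ∃ C : ℝ, 0 < C ∧ ∀ lam N : ℝ, 1 ≤ lam → 1 ≤ N → ∀ s s' : ℝ,
      (∫ p : ℝ × ℝ in {p : ℝ × ℝ | N * lam ^ (-(1 : ℝ) / 2) ≤ |p.1 - p.2|},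
          ((1 + lam * |(p.1 + p.2) - (s + s')|) ^ 2)⁻¹ *
            ((1 + lam * |(p.1 - p.2) ^ 2 - (s - s') ^ 2|) ^ 2)⁻¹)
        ≤ C * lam ^ (-(3 : ℝ) / 2) * N⁻¹ := by
  refine ⟨π ^ 2 / 2, by positivity, fun lam N hlam hN s s' => ?_⟩
  have hlam0 : 0 < lam := by linarith
  set δ := N * lam ^ (-(1 : ℝ) / 2) with hδ_def
  have hδ : 0 < δ := by positivity
  have hscale : 2⁻¹ * (π / lam) * (δ⁻¹ * (π / lam)) = π ^ 2 / 2 * lam ^ (-(3 : ℝ) / 2) * N⁻¹ := by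
    rw [hδ_def, show -(3 : ℝ) / 2 = -(-(1 : ℝ) / 2) + (-2 : ℤ) by norm_num, rpow_add hlam0,
      rpow_neg hlam0.le, rpow_intCast]
    field_simp
  rw [integral_eq_lintegral_of_nonneg_ae (.of_forall fun p => by positivity) (by fun_prop)]
  refine ENNReal.toReal_le_of_le_ofReal (by positivity) ?_
  calc ∫⁻ p in {p : ℝ × ℝ | δ ≤ |p.1 - p.2|}, ENNReal.ofReal
          (((1 + lam * |(p.1 + p.2) - (s + s')|) ^ 2)⁻¹ *
            ((1 + lam * |(p.1 - p.2) ^ 2 - (s - s') ^ 2|) ^ 2)⁻¹)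
      = ∫⁻ p in (fun p : ℝ × ℝ => p.1 - p.2) ⁻¹' {v | δ ≤ |v|},
          ENNReal.ofReal ((1 + lam * |(p.1 + p.2) - (s + s')|) ^ 2)⁻¹ *
            ENNReal.ofReal ((1 + lam * |(p.1 - p.2) ^ 2 - (s - s') ^ 2|) ^ 2)⁻¹ := by
        simp only [ENNReal.ofReal_mul (inv_nonneg.2 (sq_nonneg _))]
        rfl
    _ = 2⁻¹ * (∫⁻ u, ENNReal.ofReal ((1 + lam * |u - (s + s')|) ^ 2)⁻¹) *
          ∫⁻ v in {v | δ ≤ |v|}, ENNReal.ofReal ((1 + lam * |v ^ 2 - (s - s') ^ 2|) ^ 2)⁻¹ :=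
        setLIntegral_preimage_sub_comp_add_mul_comp_sub
          (G := fun u => ENNReal.ofReal ((1 + lam * |u - (s + s')|) ^ 2)⁻¹)
          (H := fun v => ENNReal.ofReal ((1 + lam * |v ^ 2 - (s - s') ^ 2|) ^ 2)⁻¹)
          (by fun_prop) (by fun_prop) (measurableSet_le measurable_const measurable_abs)
    _ ≤ 2⁻¹ * ENNReal.ofReal (π / lam) * (ENNReal.ofReal δ⁻¹ * ENNReal.ofReal (π / lam)) := by
        gcongr
        · exact lintegral_inv_one_add_mul_abs_sub_sq_le hlam0 _
        · exact (setLIntegral_abs_ge_comp_sq_le hδ _).trans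
            (mul_le_mul_right (lintegral_inv_one_add_mul_abs_sub_sq_le hlam0 _) _)
    _ = ENNReal.ofReal (π ^ 2 / 2 * lam ^ (-(3 : ℝ) / 2) * N⁻¹) := by
        rw [← hscale, ENNReal.ofReal_mul (by positivity), ENNReal.ofReal_mul (by positivity),
          ENNReal.ofReal_mul (by positivity), ENNReal.ofReal_inv_of_pos two_pos,
          ENNReal.ofReal_ofNat]
end

section
/- Let φ : ℝ² × ℝ → ℝ be smooth and satisfy the Carleson–Sjölin condition at a point (x₀, t₀). Define Φ : ℝ² × ℝ² → ℝ by Φ(x, u₁, u₂) = φ(x, (u₂ + u₁)/2) + φ(x, (u₂ − u₁)/2). Then there exist c > 0 and a neighborhood U of (x₀, (0, 2t₀)) in ℝ² × ℝ² such that for all (x, u₁, u₂) ∈ U one has |det(∂²Φ/∂x_i∂u_j)_{i,j=1,2}| ≥ c |u₁|. -/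
noncomputable section

/-- The partial derivative `∂φ/∂xᵢ` of `φ : ℝ² × ℝ → ℝ` in the `i`-th `x`-direction,
with `ℝ²` realized as `EuclideanSpace ℝ (Fin 2)`. -/
def phiXDeriv (φ : EuclideanSpace ℝ (Fin 2) × ℝ → ℝ) (i : Fin 2)
    (x : EuclideanSpace ℝ (Fin 2)) (t : ℝ) : ℝ :=
  fderiv ℝ (fun y => φ (y, t)) x (EuclideanSpace.single i 1)

/-- The Carleson–Sjölin determinant
`det [[∂²φ/∂x₁∂t, ∂²φ/∂x₂∂t], [∂³φ/∂x₁∂t², ∂³φ/∂x₂∂t²]]` at the point `(x, t)`. -/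
def carlesonSjolinDet (φ : EuclideanSpace ℝ (Fin 2) × ℝ → ℝ)
    (x : EuclideanSpace ℝ (Fin 2)) (t : ℝ) : ℝ :=
  deriv (phiXDeriv φ 0 x) t * deriv (deriv (phiXDeriv φ 1 x)) t -
    deriv (phiXDeriv φ 1 x) t * deriv (deriv (phiXDeriv φ 0 x)) t

/-- The coordinate directions of `ℝ × ℝ` (the `u = (u₁, u₂)` variables). -/
def uDir : Fin 2 → ℝ × ℝ := ![(1, 0), (0, 1)]

/-- The entries of the mixed Hessian `∂²Φ/∂xᵢ∂uⱼ` of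
`Φ : ℝ² × (ℝ × ℝ) → ℝ`. -/
def mixedHessianEntryXU (Φ : EuclideanSpace ℝ (Fin 2) × (ℝ × ℝ) → ℝ) (i j : Fin 2)
    (x : EuclideanSpace ℝ (Fin 2)) (u : ℝ × ℝ) : ℝ :=
  fderiv ℝ (fun w => fderiv ℝ (fun y => Φ (y, w)) x (EuclideanSpace.single i 1)) u (uDir j)

/-- The determinant of the `2 × 2` mixed Hessian `(∂²Φ/∂xᵢ∂uⱼ)`. -/
def mixedHessianDetXU (Φ : EuclideanSpace ℝ (Fin 2) × (ℝ × ℝ) → ℝ)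
    (x : EuclideanSpace ℝ (Fin 2)) (u : ℝ × ℝ) : ℝ :=
  mixedHessianEntryXU Φ 0 0 x u * mixedHessianEntryXU Φ 1 1 x u -
    mixedHessianEntryXU Φ 0 1 x u * mixedHessianEntryXU Φ 1 0 x u

/-!
With `s = (u₂ + u₁)/2`, `r = (u₂ - u₁)/2` and `bᵢ(x, t) = ∂²φ/∂xᵢ∂t`, the chain rule gives
`det(∂²Φ/∂xᵢ∂uⱼ) = (b₀(x, s) b₁(x, r) - b₀(x, r) b₁(x, s)) / 2`. By the mean value theorem in `t`
this equals `(r - s)/2 · (b₀(x, s) ∂ₜb₁(x, η) - b₁(x, s) ∂ₜb₀(x, ξ))` for some `ξ, η` between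
`r` and `s`. Near `(x₀, t₀, t₀)` the second factor is close to the Carleson–Sjölin determinant,
hence bounded away from `0`, while `|r - s| = |u₁|`.
-/

open Set Filter Topology Function Metric

theorem exists_mem_uIcc_sub_eq_deriv_mul {f : ℝ → ℝ} (hf : Differentiable ℝ f) (a b : ℝ) :
    ∃ ξ ∈ uIcc a b, f b - f a = deriv f ξ * (b - a) := by
  wlog hab : a ≤ b generalizing a b
  · obtain ⟨ξ, hξ, h⟩ := this b a (le_of_not_ge hab)
    exact ⟨ξ, uIcc_comm a b ▸ hξ, by linarith⟩
  rcases hab.eq_or_lt with rfl | hab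
  · exact ⟨a, left_mem_uIcc, by simp⟩
  obtain ⟨ξ, hξ, h⟩ := exists_deriv_eq_slope f hab hf.continuous.continuousOn hf.differentiableOn
  refine ⟨ξ, Icc_subset_uIcc (Ioo_subset_Icc_self hξ), ?_⟩
  rw [h, div_mul_cancel₀ _ (sub_ne_zero.2 hab.ne')]

theorem exists_mem_uIcc_mul_sub_mul_eq {f g : ℝ → ℝ} (hf : Differentiable ℝ f)
    (hg : Differentiable ℝ g) (s r : ℝ) :
    ∃ ξ ∈ uIcc s r, ∃ η ∈ uIcc s r,
      f s * g r - f r * g s = (r - s) * (f s * deriv g η - g s * deriv f ξ) := by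
  obtain ⟨ξ, hξ, hfξ⟩ := exists_mem_uIcc_sub_eq_deriv_mul hf s r
  obtain ⟨η, hη, hgη⟩ := exists_mem_uIcc_sub_eq_deriv_mul hg s r
  exact ⟨ξ, hξ, η, hη, by linear_combination f s * hgη - g s * hfξ⟩

theorem exists_pos_mul_abs_sub_le_abs_mul_sub_mul {X : Type*} [PseudoMetricSpace X]
    {f g : X → ℝ → ℝ} {x₀ : X} {t₀ : ℝ}
    (hf : ContinuousAt (uncurry f) (x₀, t₀)) (hg : ContinuousAt (uncurry g) (x₀, t₀))
    (hf' : ContinuousAt (uncurry fun x => deriv (f x)) (x₀, t₀))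
    (hg' : ContinuousAt (uncurry fun x => deriv (g x)) (x₀, t₀))
    (hfd : ∀ x, Differentiable ℝ (f x)) (hgd : ∀ x, Differentiable ℝ (g x))
    (h : f x₀ t₀ * deriv (g x₀) t₀ - g x₀ t₀ * deriv (f x₀) t₀ ≠ 0) :
    ∃ c > 0, ∀ᶠ q in 𝓝 (x₀, t₀, t₀),
      c * |q.2.1 - q.2.2| ≤ |f q.1 q.2.1 * g q.1 q.2.2 - f q.1 q.2.2 * g q.1 q.2.1| := by
  set K := f x₀ t₀ * deriv (g x₀) t₀ - g x₀ t₀ * deriv (f x₀) t₀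
  -- the mean value theorem evaluates the two derivatives at different points `ξ, η`
  set W : X × ℝ × ℝ × ℝ → ℝ := fun q =>
    f q.1 q.2.1 * deriv (g q.1) q.2.2.2 - g q.1 q.2.1 * deriv (f q.1) q.2.2.1
  have hW : ContinuousAt W (x₀, t₀, t₀, t₀) := by
    have h₁ : ContinuousAt (fun q : X × ℝ × ℝ × ℝ => (q.1, q.2.1)) (x₀, t₀, t₀, t₀) := by
      fun_prop
    have h₂ : ContinuousAt (fun q : X × ℝ × ℝ × ℝ => (q.1, q.2.2.1)) (x₀, t₀, t₀, t₀) := by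
      fun_prop
    have h₃ : ContinuousAt (fun q : X × ℝ × ℝ × ℝ => (q.1, q.2.2.2)) (x₀, t₀, t₀, t₀) := by
      fun_prop
    exact ((hf.comp_of_eq h₁ rfl).mul (hg'.comp_of_eq h₃ rfl)).sub
      ((hg.comp_of_eq h₁ rfl).mul (hf'.comp_of_eq h₂ rfl))
  obtain ⟨ε, hε, hball⟩ := eventually_nhds_iff_ball.1
    (hW.abs.eventually (lt_mem_nhds (half_lt_self (abs_pos.2 h))))
  refine ⟨|K| / 2, by positivity, eventually_nhds_iff_ball.2 ⟨ε, hε, ?_⟩⟩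
  rintro ⟨x, s, r⟩ hq
  obtain ⟨hx, hs, hr⟩ : dist x x₀ < ε ∧ dist s t₀ < ε ∧ dist r t₀ < ε := by
    simpa [Prod.dist_eq] using hq
  obtain ⟨ξ, hξ, η, hη, hw⟩ := exists_mem_uIcc_mul_sub_mul_eq (hfd x) (hgd x) s r
  have hsub : uIcc s r ⊆ ball t₀ ε := (convex_ball t₀ ε).ordConnected.uIcc_subset hs hr
  have hWq : |K| / 2 < |W (x, s, ξ, η)| := hball (x, s, ξ, η) (by
    simp only [mem_ball, Prod.dist_eq, max_lt_iff]
    exact ⟨hx, hs, hsub hξ, hsub hη⟩)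
  rw [hw, abs_mul, abs_sub_comm r s, mul_comm]
  exact mul_le_mul_of_nonneg_left hWq.le (abs_nonneg _)

section Uncurry

variable {E F : Type*} [NormedAddCommGroup E] [NormedSpace ℝ E]
  [NormedAddCommGroup F] [NormedSpace ℝ F] {m n : WithTop ℕ∞} {f : E → ℝ → F}

theorem ContDiff.uncurry_deriv (hf : ContDiff ℝ n (uncurry f)) (hmn : m + 1 ≤ n) :
    ContDiff ℝ m (uncurry fun x => deriv (f x)) :=
  ContDiff.fderiv_apply (f := fun p : E × ℝ => f p.1)
    (hf.comp (contDiff_fst.fst.prodMk contDiff_snd)) contDiff_snd contDiff_const hmn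

theorem Differentiable.of_uncurry (hf : Differentiable ℝ (uncurry f)) (x : E) :
    Differentiable ℝ (f x) :=
  hf.comp (differentiable_const x |>.prodMk differentiable_id)

end Uncurry

theorem fderiv_comp_half_add_comp_half_sub_apply {g : ℝ → ℝ} (hg : Differentiable ℝ g)
    (u v : ℝ × ℝ) :
    fderiv ℝ (fun w : ℝ × ℝ => g ((w.2 + w.1) / 2) + g ((w.2 - w.1) / 2)) u v =
      (deriv g ((u.2 + u.1) / 2) * (v.2 + v.1) +
        deriv g ((u.2 - u.1) / 2) * (v.2 - v.1)) / 2 := by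
  simp only [div_eq_mul_inv]
  have hsum : HasFDerivAt (fun w : ℝ × ℝ => g ((w.2 + w.1) * 2⁻¹)) _ u :=
    (hg _).hasDerivAt.comp_hasFDerivAt u
      (((hasFDerivAt_snd (𝕜 := ℝ) (p := u)).fun_add hasFDerivAt_fst).mul_const _)
  have hdiff : HasFDerivAt (fun w : ℝ × ℝ => g ((w.2 - w.1) * 2⁻¹)) _ u :=
    (hg _).hasDerivAt.comp_hasFDerivAt u
      (((hasFDerivAt_snd (𝕜 := ℝ) (p := u)).fun_sub hasFDerivAt_fst).mul_const _)
  rw [(hsum.fun_add hdiff).fderiv]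
  simp only [add_apply, smul_apply, smul_add, sub_apply, smul_eq_mul,
    ContinuousLinearMap.coe_fst', ContinuousLinearMap.coe_snd']
  ring

section MixedHessian

variable {φ : EuclideanSpace ℝ (Fin 2) × ℝ → ℝ} {Φ : EuclideanSpace ℝ (Fin 2) × (ℝ × ℝ) → ℝ}

theorem contDiff_uncurry_phiXDeriv {m n : WithTop ℕ∞} (hφ : ContDiff ℝ n φ) (hmn : m + 1 ≤ n)
    (i : Fin 2) : ContDiff ℝ m (uncurry (phiXDeriv φ i)) :=
  ContDiff.fderiv_apply (f := fun p y => φ (y, p.2)) (hφ.comp (by fun_prop)) contDiff_fst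
    contDiff_const hmn

theorem mixedHessianEntryXU_eq (hφ : ContDiff ℝ 2 φ)
    (hΦ : ∀ x u, Φ (x, u) = φ (x, (u.2 + u.1) / 2) + φ (x, (u.2 - u.1) / 2))
    (i j : Fin 2) (x : EuclideanSpace ℝ (Fin 2)) (u : ℝ × ℝ) :
    mixedHessianEntryXU Φ i j x u =
      (deriv (phiXDeriv φ i x) ((u.2 + u.1) / 2) * ((uDir j).2 + (uDir j).1) +
        deriv (phiXDeriv φ i x) ((u.2 - u.1) / 2) * ((uDir j).2 - (uDir j).1)) / 2 := by
  have hφx (t : ℝ) : Differentiable ℝ (fun y => φ (y, t)) :=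
    (hφ.differentiable (by norm_num)).comp (by fun_prop)
  have hinner (w : ℝ × ℝ) : fderiv ℝ (fun y => Φ (y, w)) x (EuclideanSpace.single i 1) =
      phiXDeriv φ i x ((w.2 + w.1) / 2) + phiXDeriv φ i x ((w.2 - w.1) / 2) := by
    simp only [hΦ]
    rw [fderiv_fun_add (hφx _ x) (hφx _ x)]
    rfl
  have hφxt : Differentiable ℝ (phiXDeriv φ i x) :=
    ((contDiff_uncurry_phiXDeriv (m := 1) hφ (by norm_num) i).differentiable
      one_ne_zero).of_uncurry x
  rw [mixedHessianEntryXU, funext hinner]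
  exact fderiv_comp_half_add_comp_half_sub_apply hφxt u _

theorem mixedHessianDetXU_eq (hφ : ContDiff ℝ 2 φ)
    (hΦ : ∀ x u, Φ (x, u) = φ (x, (u.2 + u.1) / 2) + φ (x, (u.2 - u.1) / 2))
    (x : EuclideanSpace ℝ (Fin 2)) (u : ℝ × ℝ) :
    mixedHessianDetXU Φ x u =
      (deriv (phiXDeriv φ 0 x) ((u.2 + u.1) / 2) * deriv (phiXDeriv φ 1 x) ((u.2 - u.1) / 2) -
        deriv (phiXDeriv φ 0 x) ((u.2 - u.1) / 2) *
          deriv (phiXDeriv φ 1 x) ((u.2 + u.1) / 2)) / 2 := by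
  simp only [mixedHessianDetXU, mixedHessianEntryXU_eq hφ hΦ, uDir, Matrix.cons_val_zero,
    Matrix.cons_val_one, Matrix.cons_val_fin_one]
  ring

end MixedHessian

/-- If `φ : ℝ² × ℝ → ℝ` is smooth and satisfies the Carleson–Sjölin
condition at `(x₀, t₀)`, and `Φ(x, u₁, u₂) = φ(x, (u₂+u₁)/2) + φ(x, (u₂-u₁)/2)`, then there
are `c > 0` and a neighborhood `U` of `(x₀, (0, 2t₀))` on which
`|det(∂²Φ/∂xᵢ∂uⱼ)| ≥ c |u₁|`. -/
theorem mixed_hessian_det_lower_bound_of_carleson_sjolin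
    (φ : EuclideanSpace ℝ (Fin 2) × ℝ → ℝ) (hφ : ContDiff ℝ (⊤ : ℕ∞) φ)
    (x₀ : EuclideanSpace ℝ (Fin 2)) (t₀ : ℝ) (hCS : carlesonSjolinDet φ x₀ t₀ ≠ 0)
    (Φ : EuclideanSpace ℝ (Fin 2) × (ℝ × ℝ) → ℝ)
    (hΦ : ∀ (x : EuclideanSpace ℝ (Fin 2)) (u : ℝ × ℝ),
      Φ (x, u) = φ (x, (u.2 + u.1) / 2) + φ (x, (u.2 - u.1) / 2)) :
    ∃ c > (0 : ℝ), ∃ U ∈ nhds ((x₀, ((0 : ℝ), 2 * t₀))), ∀ p ∈ U,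
      c * |(p.2 : ℝ × ℝ).1| ≤ |mixedHessianDetXU Φ p.1 p.2| := by
  have hφ3 : ContDiff ℝ 3 φ := hφ.of_le (WithTop.coe_le_coe.2 le_top)
  have hB (i : Fin 2) : ContDiff ℝ 1 (uncurry fun x => deriv (phiXDeriv φ i x)) :=
    (contDiff_uncurry_phiXDeriv (m := 2) hφ3 (by norm_num) i).uncurry_deriv (by norm_num)
  have hC (i : Fin 2) : ContDiff ℝ 0 (uncurry fun x => deriv (deriv (phiXDeriv φ i x))) :=
    (hB i).uncurry_deriv (by norm_num)
  obtain ⟨c, hc, hev⟩ := exists_pos_mul_abs_sub_le_abs_mul_sub_mul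
    (hB 0).continuous.continuousAt (hB 1).continuous.continuousAt
    (hC 0).continuous.continuousAt (hC 1).continuous.continuousAt
    ((hB 0).differentiable one_ne_zero).of_uncurry ((hB 1).differentiable one_ne_zero).of_uncurry
    hCS
  have hxsr : Tendsto (fun p : EuclideanSpace ℝ (Fin 2) × ℝ × ℝ =>
      (p.1, (p.2.2 + p.2.1) / 2, (p.2.2 - p.2.1) / 2)) (𝓝 (x₀, 0, 2 * t₀)) (𝓝 (x₀, t₀, t₀)) :=
    (by fun_prop : Continuous fun p : EuclideanSpace ℝ (Fin 2) × ℝ × ℝ =>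
      (p.1, (p.2.2 + p.2.1) / 2, (p.2.2 - p.2.1) / 2)).tendsto' _ _ (by simp)
  refine ⟨c / 2, half_pos hc, _, hxsr hev, fun p hp => ?_⟩
  have hsr : (p.2.2 + p.2.1) / 2 - (p.2.2 - p.2.1) / 2 = p.2.1 := by ring
  simp only [mem_preimage, mem_ofPred_eq, hsr] at hp
  rw [mixedHessianDetXU_eq (hφ3.of_le (by norm_num)) hΦ, abs_div, abs_two]
  linarith

end
end

section
/- Fix a real number p with 2 ≤ p ≤ 6. Then there exist constants c_p, C_p > 0 such that for every integer k ≥ 1, c_p k^{(1/2)(1/2 − 1/p)} ≤ ( ∫_{S²} ( k^{1/4} (x₁² + x₂²)^{k/2} )^p dσ(x) )^{1/p} ≤ C_p k^{(1/2)(1/2 − 1/p)}. Equivalently, the L^p(S²)-norm of the highest weight spherical harmonic Q_k(x) = k^{1/4}(x₁ + i x₂)^k is comparable to k^{(1/2)(1/2 − 1/p)}, uniformly in k. -/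
/-!
On `S²` one has `|Q_k|^p = k^{p/4} (x₁² + x₂²)^{kp/2}`, so everything reduces to the moments
`M(s) = ∫_{S²} (x₁² + x₂²)^s dσ`. Integrating the `2s`-homogeneous function `(x₁² + x₂²)^s`
against the Gaussian `e^{-‖x‖²}` once in polar coordinates and once as a product over
`ℝ × ℝ²` gives `M(s) = 2π^{3/2} Γ(s + 1) / Γ(s + 3/2)`. Log-convexity of `Γ` puts
`Γ(s + 3/2) / Γ(s + 1)` between `√(s + 1/2)` and `√(s + 1)`, hence `M(kp/2) ≍ k^{-1/2}` and
`‖Q_k‖_p^p ≍ k^{p/4 - 1/2}`.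
-/

open MeasureTheory Real

noncomputable section

/-- The standard surface measure on the unit sphere `S² ⊆ ℝ³`. -/
def sphereSurfaceMeasure : Measure (Metric.sphere (0 : EuclideanSpace ℝ (Fin 3)) 1) :=
  (volume : Measure (EuclideanSpace ℝ (Fin 3))).toSphere

open Set Metric

namespace MeasureTheory

lemma Measure.integral_volumeIoiPow (n : ℕ) (g : ℝ → ℝ) :
    ∫ r, g r ∂volumeIoiPow n = ∫ r in Ioi (0 : ℝ), r ^ n * g r := by
  simp only [volumeIoiPow, ENNReal.ofReal]
  rw [integral_withDensity_eq_integral_smul ((measurable_subtype_coe.pow_const _).real_toNNReal),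
    integral_subtype_comap measurableSet_Ioi fun a ↦ (a ^ n).toNNReal • g a]
  refine setIntegral_congr_fun measurableSet_Ioi fun r hr ↦ ?_
  rw [NNReal.smul_def, Real.coe_toNNReal _ (pow_nonneg hr.out.le _), smul_eq_mul]

variable {E : Type*} [NormedAddCommGroup E] [NormedSpace ℝ E] [FiniteDimensional ℝ E]
  [Nontrivial E] [MeasurableSpace E] [BorelSpace E] (μ : Measure E) [μ.IsAddHaarMeasure]

theorem integral_comp_smul_mul_fun_norm_addHaar (f : E → ℝ) (g : ℝ → ℝ) :
    ∫ x, f (‖x‖⁻¹ • x) * g ‖x‖ ∂μ =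
      (∫ y : sphere (0 : E) 1, f y ∂μ.toSphere) *
        ∫ r in Ioi (0 : ℝ), r ^ (Module.finrank ℝ E - 1) * g r :=
  calc ∫ x, f (‖x‖⁻¹ • x) * g ‖x‖ ∂μ
      = ∫ x : ({0}ᶜ : Set E), f (‖x.1‖⁻¹ • x.1) * g ‖x.1‖ ∂μ.comap (↑) := by
        rw [integral_subtype_comap (measurableSet_singleton _).compl
          fun x ↦ f (‖x‖⁻¹ • x) * g ‖x‖, restrict_compl_singleton]
    _ = ∫ z, f z.1 * g z.2 ∂μ.toSphere.prod (.volumeIoiPow (Module.finrank ℝ E - 1)) := by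
        simpa using μ.measurePreserving_homeomorphUnitSphereProd.integral_comp
          (Homeomorph.measurableEmbedding _) fun z ↦ f z.1 * g z.2
    _ = _ := by
        rw [integral_prod_mul (fun y : sphere (0 : E) 1 ↦ f y) (fun r : Ioi (0 : ℝ) ↦ g r),
          Measure.integral_volumeIoiPow]

end MeasureTheory

namespace Real

theorem Gamma_add_half_sq_le {x : ℝ} (hx : 0 < x) :
    Gamma (x + 1 / 2) ^ 2 ≤ Gamma x * Gamma (x + 1) := by
  have h := Gamma_mul_add_mul_le_rpow_Gamma_mul_rpow_Gamma hx (by linarith : 0 < x + 1)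
    (by norm_num : (0 : ℝ) < 1 / 2) (by norm_num : (0 : ℝ) < 1 / 2) (by norm_num)
  rw [show 1 / 2 * x + 1 / 2 * (x + 1) = x + 1 / 2 by ring] at h
  calc Gamma (x + 1 / 2) ^ 2
      ≤ (Gamma x ^ (1 / 2 : ℝ) * Gamma (x + 1) ^ (1 / 2 : ℝ)) ^ 2 :=
        pow_le_pow_left₀ (Gamma_pos_of_pos (by linarith)).le h 2
    _ = Gamma x * Gamma (x + 1) := by
        rw [mul_pow, ← rpow_mul_natCast (Gamma_pos_of_pos hx).le,
          ← rpow_mul_natCast (Gamma_pos_of_pos (by linarith)).le]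
        norm_num

theorem Gamma_add_three_halves_mem_Icc {s : ℝ} (hs : -(1 / 2) < s) :
    Gamma (s + 3 / 2) ∈ Icc (√(s + 1 / 2) * Gamma (s + 1)) (√(s + 1) * Gamma (s + 1)) := by
  have hΓ₁ : 0 < Gamma (s + 1) := Gamma_pos_of_pos (by linarith)
  have hΓ₃ : 0 < Gamma (s + 3 / 2) := Gamma_pos_of_pos (by linarith)
  have hmid_one : Gamma (s + 1) ^ 2 ≤ Gamma (s + 1 / 2) * Gamma (s + 3 / 2) := by
    have := Gamma_add_half_sq_le (x := s + 1 / 2) (by linarith)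
    ring_nf at this ⊢
    exact this
  have hmid_three_halves : Gamma (s + 3 / 2) ^ 2 ≤ Gamma (s + 1) * Gamma (s + 2) := by
    have := Gamma_add_half_sq_le (x := s + 1) (by linarith)
    ring_nf at this ⊢
    exact this
  have hrec₃ : Gamma (s + 3 / 2) = (s + 1 / 2) * Gamma (s + 1 / 2) := by
    rw [← Gamma_add_one (by linarith)]; ring_nf
  have hrec₂ : Gamma (s + 2) = (s + 1) * Gamma (s + 1) := by
    rw [← Gamma_add_one (by linarith)]; ring_nf
  constructor
  · rw [← sqrt_sq hΓ₁.le, ← sqrt_mul (by linarith), ← sqrt_sq hΓ₃.le]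
    exact sqrt_le_sqrt (by nlinarith)
  · rw [← sqrt_sq hΓ₁.le, ← sqrt_mul (by linarith), ← sqrt_sq hΓ₃.le]
    exact sqrt_le_sqrt (by nlinarith)

end Real

theorem integral_pow_mul_sq_rpow_mul_exp_neg_sq (n : ℕ) {s : ℝ} (hs : -1 < n + 2 * s) :
    ∫ r in Ioi (0 : ℝ), r ^ n * ((r ^ 2) ^ s * exp (-r ^ 2)) = Gamma ((n + 2 * s + 1) / 2) / 2 := by
  rw [← one_div_mul_eq_div, ← integral_rpow_mul_exp_neg_rpow two_pos hs]
  refine setIntegral_congr_fun measurableSet_Ioi fun r (hr : 0 < r) ↦ ?_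
  rw [rpow_add hr, rpow_natCast, rpow_mul hr.le, rpow_two, mul_assoc]

local notation "E2" => EuclideanSpace ℝ (Fin 2)
local notation "E3" => EuclideanSpace ℝ (Fin 3)

namespace EuclideanSpace

theorem integral_norm_sq_rpow_mul_exp_neg_norm_sq_fin_two {s : ℝ} (hs : -1 < s) :
    ∫ z : E2, (‖z‖ ^ 2) ^ s * exp (-‖z‖ ^ 2) = π * Gamma (s + 1) := by
  have hball : (volume : Measure E2).real (ball 0 1) = π := by
    simp [measureReal_def, pi_nonneg]
  rw [integral_fun_norm_addHaar volume fun r ↦ (r ^ 2) ^ s * exp (-r ^ 2), hball]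
  simp only [finrank_euclideanSpace, Fintype.card_fin, smul_eq_mul, nsmul_eq_mul]
  rw [integral_pow_mul_sq_rpow_mul_exp_neg_sq 1 (by push_cast; linarith)]
  push_cast
  ring_nf

theorem integral_sq_add_sq_rpow_mul_exp_neg_norm_sq_fin_three {s : ℝ} (hs : -1 < s) :
    ∫ x : E3, (x 0 ^ 2 + x 1 ^ 2) ^ s * exp (-‖x‖ ^ 2) = √π * (π * Gamma (s + 1)) := by
  let e : E3 ≃ᵐ ℝ × E2 := (MeasurableEquiv.toLp 2 (Fin 3 → ℝ)).symm.trans <|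
    (MeasurableEquiv.piFinSuccAbove (fun _ ↦ ℝ) 2).trans <|
      (MeasurableEquiv.refl ℝ).prodCongr (MeasurableEquiv.toLp 2 (Fin 2 → ℝ))
  have he : MeasurePreserving e :=
    (volume_preserving_symm_measurableEquiv_toLp _).trans <|
      (volume_preserving_piFinSuccAbove _ 2).trans <|
        (MeasurePreserving.id volume).prod (PiLp.volume_preserving_toLp _)
  have he_apply (x : E3) : e x = (x 2, !₂[x 0, x 1]) := by
    ext i
    · rfl
    · fin_cases i <;> rfl
  have hnorm₂ (x : E3) : ‖(!₂[x 0, x 1] : E2)‖ ^ 2 = x 0 ^ 2 + x 1 ^ 2 := by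
    simp [norm_sq_eq, Fin.sum_univ_two]
  have hnorm₃ (x : E3) : ‖x‖ ^ 2 = x 2 ^ 2 + (x 0 ^ 2 + x 1 ^ 2) := by
    simp [norm_sq_eq, Fin.sum_univ_three]
    ring
  let G : ℝ × E2 → ℝ := fun z ↦ exp (-z.1 ^ 2) * ((‖z.2‖ ^ 2) ^ s * exp (-‖z.2‖ ^ 2))
  calc ∫ x : E3, (x 0 ^ 2 + x 1 ^ 2) ^ s * exp (-‖x‖ ^ 2)
      = ∫ x : E3, G (e x) := by
        refine integral_congr_ae (.of_forall fun x ↦ ?_)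
        simp only [G, he_apply, hnorm₂, hnorm₃, neg_add, exp_add]
        ring
    _ = √π * (π * Gamma (s + 1)) := by
        rw [he.integral_comp' G, Measure.volume_eq_prod,
          integral_prod_mul (fun t : ℝ ↦ exp (-t ^ 2)) fun z : E2 ↦ (‖z‖ ^ 2) ^ s * exp (-‖z‖ ^ 2),
          integral_norm_sq_rpow_mul_exp_neg_norm_sq_fin_two hs,
          show ∫ t : ℝ, exp (-t ^ 2) = √π by simpa using integral_gaussian 1]

end EuclideanSpace

theorem integral_sphere_sq_add_sq_rpow {s : ℝ} (hs : -1 < s) :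
    ∫ y : sphere (0 : E3) 1, ((y : E3) 0 ^ 2 + (y : E3) 1 ^ 2) ^ s ∂sphereSurfaceMeasure =
      2 * π * √π * (Gamma (s + 1) / Gamma (s + 3 / 2)) := by
  have hpolar := integral_comp_smul_mul_fun_norm_addHaar volume
    (fun y : E3 ↦ (y 0 ^ 2 + y 1 ^ 2) ^ s) fun r ↦ (r ^ 2) ^ s * exp (-r ^ 2)
  have hhom (x : E3) (hx : x ≠ 0) :
      ((‖x‖⁻¹ • x) 0 ^ 2 + (‖x‖⁻¹ • x) 1 ^ 2) ^ s * ((‖x‖ ^ 2) ^ s * exp (-‖x‖ ^ 2)) =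
        (x 0 ^ 2 + x 1 ^ 2) ^ s * exp (-‖x‖ ^ 2) := by
    have hx' : 0 < ‖x‖ ^ 2 := by positivity
    rw [← mul_assoc, ← mul_rpow (by positivity) hx'.le]
    congr 2
    simp only [PiLp.smul_apply, smul_eq_mul]
    field_simp
  rw [integral_congr_ae ((Measure.ae_ne volume 0).mono hhom),
    EuclideanSpace.integral_sq_add_sq_rpow_mul_exp_neg_norm_sq_fin_three hs,
    finrank_euclideanSpace, Fintype.card_fin,
    integral_pow_mul_sq_rpow_mul_exp_neg_sq 2 (by push_cast; linarith),
    show ((2 : ℕ) + 2 * s + 1) / 2 = s + 3 / 2 by push_cast; ring] at hpolar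
  have hΓ : 0 < Gamma (s + 3 / 2) := Gamma_pos_of_pos (by linarith)
  rw [sphereSurfaceMeasure, mul_div_assoc', eq_div_iff hΓ.ne']
  linear_combination -2 * hpolar

theorem integral_sphere_sq_add_sq_rpow_mem_Icc {s : ℝ} (hs : -(1 / 2) < s) :
    ∫ y : sphere (0 : E3) 1, ((y : E3) 0 ^ 2 + (y : E3) 1 ^ 2) ^ s ∂sphereSurfaceMeasure ∈
      Icc (2 * π * √π / √(s + 1)) (2 * π * √π / √(s + 1 / 2)) := by
  obtain ⟨hlow, hup⟩ := Gamma_add_three_halves_mem_Icc hs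
  have hΓ₃ : 0 < Gamma (s + 3 / 2) := Gamma_pos_of_pos (by linarith)
  rw [integral_sphere_sq_add_sq_rpow (by linarith), div_eq_mul_one_div (2 * π * √π),
    div_eq_mul_one_div (2 * π * √π) √(s + 1 / 2)]
  constructor
  · refine mul_le_mul_of_nonneg_left ?_ (by positivity)
    rw [div_le_div_iff₀ (sqrt_pos.2 (by linarith)) hΓ₃]
    linarith
  · refine mul_le_mul_of_nonneg_left ?_ (by positivity)
    rw [div_le_div_iff₀ hΓ₃ (sqrt_pos.2 (by linarith))]
    linarith

theorem integral_sphere_mul_sq_add_sq_rpow_rpow {c : ℝ} (hc : 0 ≤ c) (t p : ℝ) :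
    ∫ y : sphere (0 : E3) 1, (c * ((y : E3) 0 ^ 2 + (y : E3) 1 ^ 2) ^ t) ^ p
        ∂sphereSurfaceMeasure =
      c ^ p * ∫ y : sphere (0 : E3) 1, ((y : E3) 0 ^ 2 + (y : E3) 1 ^ 2) ^ (t * p)
        ∂sphereSurfaceMeasure := by
  rw [← integral_const_mul]
  refine integral_congr_ae (.of_forall fun y ↦ ?_)
  dsimp only
  rw [mul_rpow hc (by positivity), ← rpow_mul (by positivity)]

theorem sqrt_mul_integral_sphere_sq_add_sq_rpow_mem_Icc {p : ℝ} (hp : 0 < p) {k : ℝ}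
    (hk : 1 ≤ k) :
    √k * ∫ y : sphere (0 : E3) 1, ((y : E3) 0 ^ 2 + (y : E3) 1 ^ 2) ^ (k / 2 * p)
        ∂sphereSurfaceMeasure ∈
      Icc (2 * π * √π / √(p / 2 + 1)) (2 * π * √π / √(p / 2)) := by
  have hk₀ : 0 < k := by linarith
  obtain ⟨hlow, hup⟩ := integral_sphere_sq_add_sq_rpow_mem_Icc (s := k / 2 * p)
    (by linarith [show 0 < k / 2 * p by positivity])
  constructor
  · calc 2 * π * √π / √(p / 2 + 1)
        = √k * (2 * π * √π / √((p / 2 + 1) * k)) := by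
          rw [sqrt_mul (by positivity) k]
          field_simp
      _ ≤ √k * (2 * π * √π / √(k / 2 * p + 1)) := by gcongr; nlinarith
      _ ≤ _ := by gcongr
  · calc _ ≤ √k * (2 * π * √π / √(k / 2 * p + 1 / 2)) := by gcongr
      _ ≤ √k * (2 * π * √π / √(p / 2 * k)) := by gcongr; nlinarith
      _ = 2 * π * √π / √(p / 2) := by
          rw [sqrt_mul (by positivity) k]
          field_simp

theorem highest_weight_spherical_harmonic_Lp_comparable_general (p : ℝ) (hp2 : 2 ≤ p) :
    ∃ c C : ℝ, 0 < c ∧ 0 < C ∧ ∀ k : ℕ, 1 ≤ k →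
      c * (k : ℝ) ^ ((1 / 2 : ℝ) * (1 / 2 - 1 / p)) ≤
        (∫ x : Metric.sphere (0 : EuclideanSpace ℝ (Fin 3)) 1,
            ((k : ℝ) ^ ((1 : ℝ) / 4) *
              ((x : EuclideanSpace ℝ (Fin 3)) 0 ^ 2 +
                (x : EuclideanSpace ℝ (Fin 3)) 1 ^ 2) ^ ((k : ℝ) / 2)) ^ p
            ∂sphereSurfaceMeasure) ^ (1 / p) ∧
      (∫ x : Metric.sphere (0 : EuclideanSpace ℝ (Fin 3)) 1,
            ((k : ℝ) ^ ((1 : ℝ) / 4) *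
              ((x : EuclideanSpace ℝ (Fin 3)) 0 ^ 2 +
                (x : EuclideanSpace ℝ (Fin 3)) 1 ^ 2) ^ ((k : ℝ) / 2)) ^ p
            ∂sphereSurfaceMeasure) ^ (1 / p) ≤
        C * (k : ℝ) ^ ((1 / 2 : ℝ) * (1 / 2 - 1 / p)) := by
  have hp : 0 < p := by linarith
  refine ⟨(2 * π * √π / √(p / 2 + 1)) ^ (1 / p), (2 * π * √π / √(p / 2)) ^ (1 / p),
    by positivity, by positivity, fun k hk ↦ ?_⟩
  have hk₁ : (1 : ℝ) ≤ k := by exact_mod_cast hk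
  have hk₀ : (0 : ℝ) < k := by linarith
  rw [integral_sphere_mul_sq_add_sq_rpow_rpow (by positivity)]
  set M := ∫ y : sphere (0 : E3) 1, ((y : E3) 0 ^ 2 + (y : E3) 1 ^ 2) ^ ((k : ℝ) / 2 * p)
    ∂sphereSurfaceMeasure
  have hM : 0 ≤ M := integral_nonneg fun y ↦ by positivity
  have hsplit : (((k : ℝ) ^ ((1 : ℝ) / 4)) ^ p * M) ^ (1 / p) =
      (k : ℝ) ^ ((1 / 2 : ℝ) * (1 / 2 - 1 / p)) * (√k * M) ^ (1 / p) := by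
    rw [← rpow_mul hk₀.le, sqrt_eq_rpow,
      show (1 : ℝ) / 4 * p = (1 / 2 * (1 / 2 - 1 / p)) * p + 1 / 2 by field_simp; ring,
      rpow_add hk₀, rpow_mul hk₀.le, mul_assoc, mul_rpow (by positivity) (by positivity), one_div p,
      rpow_rpow_inv (by positivity) hp.ne']
  obtain ⟨hlow, hup⟩ := sqrt_mul_integral_sphere_sq_add_sq_rpow_mem_Icc hp hk₁
  rw [hsplit, mul_comm _ ((k : ℝ) ^ _), mul_comm _ ((k : ℝ) ^ _)]
  exact ⟨by gcongr, by gcongr⟩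

/-- For fixed `2 ≤ p ≤ 6` the `L^p(S²)`-norm of the highest weight
spherical harmonic `Q_k = k^{1/4}(x₁ + i x₂)^k`, i.e.
`(∫_{S²} (k^{1/4} (x₁² + x₂²)^{k/2})^p dσ)^{1/p}`, is comparable to
`k^{(1/2)(1/2 - 1/p)}`, uniformly in `k ≥ 1`. -/
theorem highest_weight_spherical_harmonic_Lp_comparable (p : ℝ) (hp2 : 2 ≤ p) (hp6 : p ≤ 6) :
    ∃ c C : ℝ, 0 < c ∧ 0 < C ∧ ∀ k : ℕ, 1 ≤ k →
      c * (k : ℝ) ^ ((1 / 2 : ℝ) * (1 / 2 - 1 / p)) ≤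
        (∫ x : Metric.sphere (0 : EuclideanSpace ℝ (Fin 3)) 1,
            ((k : ℝ) ^ ((1 : ℝ) / 4) *
              ((x : EuclideanSpace ℝ (Fin 3)) 0 ^ 2 +
                (x : EuclideanSpace ℝ (Fin 3)) 1 ^ 2) ^ ((k : ℝ) / 2)) ^ p
            ∂sphereSurfaceMeasure) ^ (1 / p) ∧
      (∫ x : Metric.sphere (0 : EuclideanSpace ℝ (Fin 3)) 1,
            ((k : ℝ) ^ ((1 : ℝ) / 4) *
              ((x : EuclideanSpace ℝ (Fin 3)) 0 ^ 2 +
                (x : EuclideanSpace ℝ (Fin 3)) 1 ^ 2) ^ ((k : ℝ) / 2)) ^ p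
            ∂sphereSurfaceMeasure) ^ (1 / p) ≤
        C * (k : ℝ) ^ ((1 / 2 : ℝ) * (1 / 2 - 1 / p)) :=
  highest_weight_spherical_harmonic_Lp_comparable_general p hp2

end
end

section
/- There exist a constant c > 0 and an integer k₀ such that for every integer k ≥ k₀, k^{1/2} ∫_{{x ∈ S² : |x₃| < sin(k^{−1/2})}} (x₁² + x₂²)^k dσ(x) ≥ c. In particular, for the highest weight spherical harmonics Q_k(x) = k^{1/4}(x₁ + i x₂)^k on S², one has liminf_{k → ∞} ∫_{T_{k^{−1/2}}(γ₀)} |Q_k|² dσ > 0, where T_{k^{−1/2}}(γ₀) = {x ∈ S² : |x₃| < sin(k^{−1/2})} is the set of points of S² at spherical (geodesic) distance less than k^{−1/2} from the equator γ₀ = {x ∈ S² : x₃ = 0}. -/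
open MeasureTheory Real

noncomputable section

/-!
On the tube `|x₃| < s` with `s² ≤ 1/k` the integrand `(x₁² + x₂²)^k = (1 - x₃²)^k` is at least
`(1 - 1/k)^k ≥ e⁻²`. The tube has surface measure `≥ 3s/8`: since `σ(A) = 3 vol((0,1)·A)`, it
suffices that the cone over the tube contains a box of volume `s/8`. With `s = sin (k^{-1/2})`
and `sin t ≥ 2t/π`, the mass of the tube is `≳ k^{-1/2}`, which the factor `k^{1/2}` cancels.
-/

open Set Metric
open scoped Pointwise

theorem Real.exp_neg_two_mul_le_one_sub {u : ℝ} (hu0 : 0 ≤ u) (hu1 : u ≤ 1 / 2) :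
    exp (-(2 * u)) ≤ 1 - u := by
  rw [exp_neg, inv_le_iff_one_le_mul₀ (exp_pos _)]
  calc 1 ≤ (1 - u) * (1 + 2 * u) := by nlinarith
    _ ≤ (1 - u) * exp (2 * u) := by gcongr; linarith; linarith [add_one_le_exp (2 * u)]

theorem Real.exp_neg_two_le_one_sub_pow {n : ℕ} (hn : 2 ≤ n) {u : ℝ} (hu : u ≤ (n : ℝ)⁻¹) :
    exp (-2) ≤ (1 - u) ^ n := by
  have hn' : (2 : ℝ) ≤ n := by exact_mod_cast hn
  have hinv : (n : ℝ)⁻¹ ≤ 1 / 2 := by rw [inv_le_comm₀] <;> linarith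
  calc exp (-2) = exp (-(2 * (n : ℝ)⁻¹)) ^ n := by
        rw [← exp_nat_mul]; field_simp
    _ ≤ (1 - (n : ℝ)⁻¹) ^ n := by
        gcongr
        exact exp_neg_two_mul_le_one_sub (by positivity) hinv
    _ ≤ (1 - u) ^ n := by gcongr; linarith

theorem EuclideanSpace.volume_preimage_ofLp_pi {ι : Type*} [Fintype ι] {I : ι → Set ℝ}
    (hI : ∀ i, MeasurableSet (I i)) :
    volume (WithLp.ofLp ⁻¹' univ.pi I : Set (EuclideanSpace ℝ ι)) = ∏ i, volume (I i) := by
  rw [(PiLp.volume_preserving_ofLp ι).measure_preimage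
    (MeasurableSet.univ_pi hI).nullMeasurableSet, volume_pi_pi]

section Cone

variable {E : Type*} [NormedAddCommGroup E] [NormedSpace ℝ E]

theorem mem_Ioo_smul_image_coe_sphere {P : E → Prop} {y : E} (hy0 : y ≠ 0) (hy1 : ‖y‖ < 1)
    (hP : P (‖y‖⁻¹ • y)) :
    y ∈ Ioo (0 : ℝ) 1 • ((↑) '' {x : sphere (0 : E) 1 | P x} : Set E) := by
  have hr : 0 < ‖y‖ := norm_pos_iff.2 hy0
  have hx : ‖y‖⁻¹ • y ∈ sphere (0 : E) 1 := by
    rw [mem_sphere_zero_iff_norm, norm_smul, norm_inv, norm_norm, inv_mul_cancel₀ hr.ne']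
  exact mem_smul.2 ⟨‖y‖, ⟨hr, hy1⟩, _, ⟨⟨_, hx⟩, hP, rfl⟩, smul_inv_smul₀ hr.ne' y⟩

theorem MeasureTheory.Measure.le_toSphere_setOf [MeasurableSpace E] [BorelSpace E]
    (μ : Measure E) {P : E → Prop} (hP : MeasurableSet {x : sphere (0 : E) 1 | P x}) {B : Set E}
    (hB : ∀ y ∈ B, y ≠ 0 ∧ ‖y‖ < 1 ∧ P (‖y‖⁻¹ • y)) :
    Module.finrank ℝ E * μ B ≤ μ.toSphere {x | P x} := by
  rw [μ.toSphere_apply' hP]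
  gcongr
  intro y hy
  obtain ⟨hy0, hy1, hPy⟩ := hB y hy
  exact mem_Ioo_smul_image_coe_sphere hy0 hy1 hPy

end Cone

local notation "ℝ³" => EuclideanSpace ℝ (Fin 3)
local notation "𝕊²" => Metric.sphere (0 : ℝ³) 1

instance : IsFiniteMeasure sphereSurfaceMeasure := by
  unfold sphereSurfaceMeasure; infer_instance

def equatorialTube (s : ℝ) : Set 𝕊² := {x | |(x : ℝ³) 2| < s}

theorem measurableSet_equatorialTube (s : ℝ) : MeasurableSet (equatorialTube s) :=
  (isOpen_lt (by fun_prop) continuous_const).measurableSet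

theorem sq_add_sq_eq_one_sub_sq (x : 𝕊²) :
    (x : ℝ³) 0 ^ 2 + (x : ℝ³) 1 ^ 2 = 1 - (x : ℝ³) 2 ^ 2 := by
  have h := EuclideanSpace.real_norm_sq_eq (x : ℝ³)
  rw [norm_eq_of_mem_sphere x, Fin.sum_univ_three] at h
  linarith

theorem le_sphereSurfaceMeasure_equatorialTube {s : ℝ} (hs0 : 0 < s) (hs1 : s ≤ 1) :
    3 * s / 8 ≤ sphereSurfaceMeasure.real (equatorialTube s) := by
  set B : Set ℝ³ := WithLp.ofLp ⁻¹' univ.pi ![Ioo (1 / 2) (3 / 4), Ioo (-(1 / 4)) (1 / 4),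
    Ioo (-(s / 2)) (s / 2)]
  have hvol : volume B = ENNReal.ofReal (s / 8) := by
    rw [EuclideanSpace.volume_preimage_ofLp_pi
      (fun i => by fin_cases i <;> exact measurableSet_Ioo), Fin.prod_univ_three]
    simp only [Matrix.cons_val_zero, Matrix.cons_val_one, Matrix.cons_val_two, Matrix.head_cons,
      Matrix.tail_cons, Real.volume_Ioo]
    rw [← ENNReal.ofReal_mul (by norm_num), ← ENNReal.ofReal_mul (by norm_num)]
    ring_nf
  have hcone : ∀ y ∈ B, y ≠ 0 ∧ ‖y‖ < 1 ∧ |(‖y‖⁻¹ • y) 2| < s := by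
    intro y hy
    obtain ⟨hy0, hy0'⟩ : y 0 ∈ Ioo (1 / 2) (3 / 4) := hy 0 (mem_univ _)
    obtain ⟨hy1, hy1'⟩ : y 1 ∈ Ioo (-(1 / 4)) (1 / 4) := hy 1 (mem_univ _)
    obtain ⟨hy2, hy2'⟩ : y 2 ∈ Ioo (-(s / 2)) (s / 2) := hy 2 (mem_univ _)
    have hnorm_gt : 1 / 2 < ‖y‖ :=
      (lt_of_lt_of_le hy0 (le_abs_self _)).trans_le (PiLp.norm_apply_le y 0)
    have hnorm_sq : ‖y‖ ^ 2 < 1 := by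
      rw [EuclideanSpace.real_norm_sq_eq, Fin.sum_univ_three]
      nlinarith
    refine ⟨norm_pos_iff.1 (by linarith), by nlinarith, ?_⟩
    rw [PiLp.smul_apply, smul_eq_mul, abs_mul, abs_inv, abs_norm, inv_mul_lt_iff₀ (by linarith)]
    rw [abs_lt]; constructor <;> nlinarith
  have h := (volume : Measure ℝ³).le_toSphere_setOf (P := fun y => |y 2| < s)
    (measurableSet_equatorialTube s) hcone
  rw [hvol, finrank_euclideanSpace_fin] at h
  rw [Measure.real, ← ENNReal.ofReal_le_iff_le_toReal (measure_ne_top _ _)]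
  refine le_trans (le_of_eq ?_) h
  rw [← ENNReal.ofReal_natCast, ← ENNReal.ofReal_mul (by norm_num)]
  ring_nf

theorem exp_neg_two_mul_le_setIntegral_equatorialTube {k : ℕ} (hk : 2 ≤ k) {s : ℝ} (hs0 : 0 < s)
    (hsk : s ^ 2 ≤ (k : ℝ)⁻¹) :
    exp (-2) * (3 * s / 8) ≤
      ∫ x in equatorialTube s, ((x : ℝ³) 0 ^ 2 + (x : ℝ³) 1 ^ 2) ^ k ∂sphereSurfaceMeasure := by
  have hs1 : s ≤ 1 := by
    have : (k : ℝ)⁻¹ ≤ 1 := inv_le_one_of_one_le₀ (by exact_mod_cast (by omega : 1 ≤ k))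
    nlinarith
  have hbound : ∀ x ∈ equatorialTube s, exp (-2) ≤ ((x : ℝ³) 0 ^ 2 + (x : ℝ³) 1 ^ 2) ^ k := by
    intro x hx
    rw [sq_add_sq_eq_one_sub_sq]
    refine exp_neg_two_le_one_sub_pow hk (le_trans ?_ hsk)
    obtain ⟨hx₁, hx₂⟩ := abs_lt.1 hx.out
    exact (sq_lt_sq' hx₁ hx₂).le
  have hint : IntegrableOn (fun x : 𝕊² => ((x : ℝ³) 0 ^ 2 + (x : ℝ³) 1 ^ 2) ^ k)
      (equatorialTube s) sphereSurfaceMeasure :=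
    (Continuous.integrable_of_hasCompactSupport (by fun_prop)
      (HasCompactSupport.of_compactSpace _)).integrableOn
  calc exp (-2) * (3 * s / 8) ≤ exp (-2) * sphereSurfaceMeasure.real (equatorialTube s) := by
        gcongr
        exact le_sphereSurfaceMeasure_equatorialTube hs0 hs1
    _ ≤ _ := setIntegral_ge_of_const_le_real (measurableSet_equatorialTube s) (measure_ne_top _ _)
        hbound hint

/-- There are `c > 0` and `k₀` such that for all `k ≥ k₀`,
`k^{1/2} ∫_{{x ∈ S² : |x₃| < sin (k^{-1/2})}} (x₁² + x₂²)^k dσ ≥ c`; i.e. the highest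
weight spherical harmonics `Q_k` keep a fixed positive amount of `L²`-mass in the tube of
width `k^{-1/2}` around the equator `{x₃ = 0}`. -/
theorem highest_weight_mass_on_equatorial_tube :
    ∃ c : ℝ, 0 < c ∧ ∃ k₀ : ℕ, ∀ k : ℕ, k₀ ≤ k →
      c ≤ (k : ℝ) ^ ((1 : ℝ) / 2) *
          ∫ x : Metric.sphere (0 : EuclideanSpace ℝ (Fin 3)) 1 in
              {x : Metric.sphere (0 : EuclideanSpace ℝ (Fin 3)) 1 |
                |(x : EuclideanSpace ℝ (Fin 3)) 2| < Real.sin ((k : ℝ) ^ (-(1 : ℝ) / 2))},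
            ((x : EuclideanSpace ℝ (Fin 3)) 0 ^ 2 + (x : EuclideanSpace ℝ (Fin 3)) 1 ^ 2) ^ k
            ∂sphereSurfaceMeasure := by
  refine ⟨3 * exp (-2) / (4 * π), by positivity, 2, fun k hk => ?_⟩
  have hk1 : (1 : ℝ) ≤ k := by exact_mod_cast (by omega : 1 ≤ k)
  have hk0 : (0 : ℝ) < k := by linarith
  set t := (k : ℝ) ^ (-(1 : ℝ) / 2)
  have hkt : (k : ℝ) ^ ((1 : ℝ) / 2) * t = 1 := by rw [← rpow_add hk0]; norm_num
  have ht_sq : t ^ 2 = (k : ℝ)⁻¹ := by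
    rw [← rpow_natCast, ← rpow_mul hk0.le, ← rpow_neg_one]; norm_num
  have ht0 : 0 < t := rpow_pos_of_pos hk0 _
  have ht1 : t ≤ 1 := rpow_le_one_of_one_le_of_nonpos hk1 (by norm_num)
  have hsin : 2 / π * t ≤ sin t := mul_le_sin ht0.le (by linarith [pi_gt_three])
  have hsin_pos : 0 < sin t := lt_of_lt_of_le (by positivity) hsin
  have hsin_sq : sin t ^ 2 ≤ (k : ℝ)⁻¹ := ht_sq ▸ pow_le_pow_left₀ hsin_pos.le (sin_le ht0.le) 2
  calc 3 * exp (-2) / (4 * π) = (k : ℝ) ^ ((1 : ℝ) / 2) * (exp (-2) * (3 * (2 / π * t) / 8)) := by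
        linear_combination (-(3 * exp (-2) / (4 * π))) * hkt
    _ ≤ (k : ℝ) ^ ((1 : ℝ) / 2) * (exp (-2) * (3 * sin t / 8)) := by gcongr
    _ ≤ _ := mul_le_mul_of_nonneg_left
        (exp_neg_two_mul_le_setIntegral_equatorialTube hk hsin_pos hsin_sq) (by positivity)
end
end
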